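/- arXiv:2403.07056 — 7 statements merged into one kernel-verified Lean document; each statement's English description precedes it below -/
import Mathlib

section
/- Let N ≥ 1 and let λ : Fin N → ℝ be strictly positive. Define S̃(n) = log(Σ_k λ_k^n) − n·(Σ_k λ_k^n log λ_k)/(Σ_k λ_k^n) for real n. Then for every n > 0, S̃ is differentiable at n and its derivative equals S̃'(n) = −n · (Σ_{k<l} λ_k^n λ_l^n (log λ_k − log λ_l)²) / (Σ_k λ_k^n)², where the sum in the numerator is over unordered pairs of distinct indices k < l. -/
/-!
With `Z(n) = Σ_k λ_k^n` we have `Z' = Σ_k λ_k^n log λ_k` and `S̃ = log Z − n Z'/Z`, so the two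
`Z'/Z` terms cancel in `S̃' = Z'/Z − Z'/Z − n (Z'' Z − Z'^2)/Z^2`. The numerator `Z'' Z − Z'^2` is
a weighted variance of `log λ`, which Lagrange's identity writes as the sum over pairs `k < l`.
-/

open scoped BigOperators

/-- The modified Rényi entropy `S̃(n) = log(Σ_k λ_k^n) − n·(Σ_k λ_k^n log λ_k)/(Σ_k λ_k^n)`
of a strictly positive vector `λ`, as a function of a real variable `n`
(`λ_k ^ n` denotes the real power `rpow`). -/
noncomputable def modifiedRenyi {N : ℕ} (lam : Fin N → ℝ) (n : ℝ) : ℝ :=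
  Real.log (∑ k, lam k ^ n) -
    n * (∑ k, lam k ^ n * Real.log (lam k)) / (∑ k, lam k ^ n)

open Finset Real

section PairSums

variable {ι : Type*} [Fintype ι] [LinearOrder ι]

theorem Finset.sum_sum_eq_sum_sum_lt_add_sum_diag {M : Type*} [AddCommMonoid M]
    (g : ι → ι → M) :
    ∑ k, ∑ l, g k l = ∑ k, ∑ l with k < l, (g k l + g l k) + ∑ k, g k k := by
  have split (k l : ι) : g k l = (if k < l then g k l else 0) + (if l < k then g k l else 0)
      + (if k = l then g k l else 0) := by
    rcases lt_trichotomy k l with h | rfl | h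
    · simp [h, h.ne, h.not_gt]
    · simp
    · simp [h, h.ne', h.not_gt]
  calc ∑ k, ∑ l, g k l
      = ∑ k, ∑ l, (if k < l then g k l else 0) + ∑ k, ∑ l, (if l < k then g k l else 0)
          + ∑ k, g k k := by
        conv_lhs => enter [2, k, 2, l]; rw [split k l]
        simp only [sum_add_distrib, sum_ite_eq, mem_univ, if_true]
    _ = ∑ k, ∑ l with k < l, (g k l + g l k) + ∑ k, g k k := by
        rw [sum_comm (f := fun k l => if l < k then g k l else 0)]
        simp_rw [sum_filter, ← sum_add_distrib, ← ite_add_zero]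

theorem Finset.sum_mul_sq_mul_sum_sub_sq {R : Type*} [CommRing R] (a b : ι → R) :
    (∑ k, a k * b k ^ 2) * (∑ k, a k) - (∑ k, a k * b k) ^ 2
      = ∑ k, ∑ l with k < l, a k * a l * (b k - b l) ^ 2 := by
  have h := sum_sum_eq_sum_sum_lt_add_sum_diag fun k l => a k * a l * b k * (b k - b l)
  simp only [sub_self, mul_zero, sum_const_zero, add_zero] at h
  calc _ = ∑ k, ∑ l, a k * a l * b k * (b k - b l) := by
        simp only [sq, sum_mul_sum, ← sum_sub_distrib]
        refine sum_congr rfl fun k _ => sum_congr rfl fun l _ => by ring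
    _ = _ := by
        rw [h]
        refine sum_congr rfl fun k _ => sum_congr rfl fun l _ => by ring

end PairSums

section RpowSums

variable {ι : Type*} [Fintype ι] {lam : ι → ℝ}

theorem hasDerivAt_sum_rpow_mul (hpos : ∀ k, 0 < lam k) (c : ι → ℝ) (n : ℝ) :
    HasDerivAt (fun m => ∑ k, lam k ^ m * c k) (∑ k, lam k ^ n * log (lam k) * c k) n :=
  HasDerivAt.fun_sum fun k _ => ((hasStrictDerivAt_const_rpow (hpos k) n).hasDerivAt).mul_const _

theorem hasDerivAt_sum_rpow (hpos : ∀ k, 0 < lam k) (n : ℝ) :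
    HasDerivAt (fun m => ∑ k, lam k ^ m) (∑ k, lam k ^ n * log (lam k)) n := by
  simpa using hasDerivAt_sum_rpow_mul hpos 1 n

end RpowSums

/-- For a strictly positive vector `λ : Fin N → ℝ` (`N ≥ 1`), the modified
Rényi entropy `S̃` is differentiable at every `n > 0` with derivative
`S̃'(n) = −n · (Σ_{k<l} λ_k^n λ_l^n (log λ_k − log λ_l)²) / (Σ_k λ_k^n)²`. -/
theorem modifiedRenyi_hasDerivAt {N : ℕ} (hN : 1 ≤ N) (lam : Fin N → ℝ)
    (hpos : ∀ k, 0 < lam k) :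
    ∀ n : ℝ, 0 < n →
      HasDerivAt (modifiedRenyi lam)
        (-n * (∑ k, ∑ l ∈ Finset.univ.filter (fun l : Fin N => k < l),
            lam k ^ n * lam l ^ n * (Real.log (lam k) - Real.log (lam l)) ^ 2)
          / (∑ k, lam k ^ n) ^ 2) n := by
  intro n _
  have : Nonempty (Fin N) := Fin.pos_iff_nonempty.1 hN
  have hZ : 0 < ∑ k, lam k ^ n := sum_pos (fun k _ => rpow_pos_of_pos (hpos k) n) univ_nonempty
  have hlog := (hasDerivAt_sum_rpow hpos n).log hZ.ne'
  have hquot := ((hasDerivAt_id' n).fun_mul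
    (hasDerivAt_sum_rpow_mul hpos (fun k => log (lam k)) n)).fun_div
      (hasDerivAt_sum_rpow hpos n) hZ.ne'
  refine (hlog.sub hquot).congr_deriv ?_
  rw [← sum_mul_sq_mul_sum_sub_sq]
  simp only [mul_assoc, ← sq]
  field_simp
  ring
end

section
/- Let ψ and σ be density matrices on ℂ^N, and suppose σ is flat (σ² = σ / rank(σ)). Let T = (1/2)‖ψ − σ‖₁ be the trace distance between ψ and σ. Then the anti-flatness of ψ satisfies F(ψ) = Tr(ψ³) − (Tr(ψ²))² ≤ 8T. Consequently the anti-flatness of any density matrix is at most 8 times its minimal trace distance to the set of flat density matrices. -/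
open scoped BigOperators ComplexOrder

/-- The trace norm `‖A‖₁ = Tr√(AᴴA)`, computed as the sum of the square roots of the
eigenvalues of the positive semidefinite matrix `AᴴA`. -/
noncomputable def traceNorm {n : Type*} [Fintype n] [DecidableEq n]
    (A : Matrix n n ℂ) : ℝ :=
  ∑ i, Real.sqrt ((Matrix.posSemidef_conjTranspose_mul_self A).1.eigenvalues i)

/-- The anti-flatness `F(ρ) = Tr(ρ³) − (Tr(ρ²))²` of a density matrix `ρ`
(the traces are real for Hermitian `ρ`). -/
noncomputable def antiFlatness {n : Type*} [Fintype n] [DecidableEq n]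
    (ρ : Matrix n n ℂ) : ℝ :=
  ((ρ ^ 3).trace).re - (((ρ ^ 2).trace).re) ^ 2

/-! Expanding `Tr(BD)` in an eigenbasis of a traceless Hermitian `D` shows
`|Re Tr(BD)| ≤ (b - a)/2 · ‖D‖₁` whenever the numerical range of `B` lies in `[a, b]`.
For density matrices `ψ, σ` and `D = ψ - σ` one has `Tr ψ² - Tr σ² = Tr((ψ + σ)D)` and
`Tr ψ³ - Tr σ³ = Tr((ψ² + σψ + σ²)D)`, with numerical ranges in `[0, 2]` and `[0, 3]`
(the cross term is controlled by `2|⟨u, σψu⟩| ≤ ⟨u, σ²u⟩ + ⟨u, ψ²u⟩`). Hence the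
anti-flatness is `7/2`-Lipschitz for the trace norm, and it vanishes on flat states. -/

open Matrix

lemma traceNorm_nonneg {n : Type*} [Fintype n] [DecidableEq n] (A : Matrix n n ℂ) :
    0 ≤ traceNorm A :=
  Finset.sum_nonneg fun _ _ => Real.sqrt_nonneg _

namespace Matrix

variable {n : Type*} [Fintype n]

lemma re_dotProduct_conjTranspose_mulVec (A : Matrix n n ℂ) (u : n → ℂ) :
    (star u ⬝ᵥ Aᴴ *ᵥ u).re = (star u ⬝ᵥ A *ᵥ u).re := by
  rw [star_dotProduct, star_mulVec, conjTranspose_conjTranspose, ← dotProduct_mulVec,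
    Complex.star_def, Complex.conj_re]

lemma re_dotProduct_mulVec_le_of_posSemidef_sub {A B : Matrix n n ℂ} (h : (B - A).PosSemidef)
    (u : n → ℂ) : (star u ⬝ᵥ A *ᵥ u).re ≤ (star u ⬝ᵥ B *ᵥ u).re := by
  have := h.re_dotProduct_nonneg u
  rw [sub_mulVec, dotProduct_sub, map_sub] at this
  simp only [RCLike.re_to_complex] at this
  linarith

lemma IsHermitian.two_mul_abs_re_dotProduct_mul_mulVec_le {A B : Matrix n n ℂ}
    (hA : A.IsHermitian) (hB : B.IsHermitian) (u : n → ℂ) :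
    2 * |(star u ⬝ᵥ (A * B) *ᵥ u).re| ≤
      (star u ⬝ᵥ (A * A) *ᵥ u).re + (star u ⬝ᵥ (B * B) *ᵥ u).re := by
  have hBA : (star u ⬝ᵥ (B * A) *ᵥ u).re = (star u ⬝ᵥ (A * B) *ᵥ u).re := by
    rw [← re_dotProduct_conjTranspose_mulVec, conjTranspose_mul, hA.eq, hB.eq]
  have hsub := (posSemidef_conjTranspose_mul_self (A - B)).re_dotProduct_nonneg u
  have hadd := (posSemidef_conjTranspose_mul_self (A + B)).re_dotProduct_nonneg u
  rw [conjTranspose_sub, hA.eq, hB.eq, sub_mul, mul_sub, mul_sub] at hsub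
  rw [conjTranspose_add, hA.eq, hB.eq, add_mul, mul_add, mul_add] at hadd
  simp only [sub_mulVec, add_mulVec, dotProduct_sub, dotProduct_add, map_sub, map_add,
    RCLike.re_to_complex, hBA] at hsub hadd
  rcases abs_cases (star u ⬝ᵥ (A * B) *ᵥ u).re with ⟨h, -⟩ | ⟨h, -⟩ <;> linarith

variable [DecidableEq n]

lemma trace_add_mul_sub (A B : Matrix n n ℂ) :
    ((A + B) * (A - B)).trace = (A ^ 2).trace - (B ^ 2).trace := by
  simp only [add_mul, mul_sub, sq, trace_add, trace_sub, trace_mul_comm B A]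
  ring

lemma trace_mul_self_add_mul_add_mul_self_mul_sub (A B : Matrix n n ℂ) :
    ((A * A + B * A + B * B) * (A - B)).trace = (A ^ 3).trace - (B ^ 3).trace := by
  simp only [add_mul, mul_sub, pow_succ, pow_zero, one_mul, trace_add, trace_sub]
  rw [trace_mul_cycle A A B, trace_mul_cycle B B A, trace_mul_cycle A B B]
  ring

lemma trace_toEuclideanLin (A : Matrix n n ℂ) :
    LinearMap.trace ℂ _ (toEuclideanLin A) = A.trace := by
  simp [toLpLin_eq_toLin]

lemma IsHermitian.trace_mul_eq_sum {D : Matrix n n ℂ} (hD : D.IsHermitian) (B : Matrix n n ℂ) :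
    (B * D).trace = ∑ i, (hD.eigenvalues i : ℂ) *
      (star ⇑(hD.eigenvectorBasis i) ⬝ᵥ B *ᵥ ⇑(hD.eigenvectorBasis i)) := by
  rw [← trace_toEuclideanLin, LinearMap.trace_eq_sum_inner _ hD.eigenvectorBasis]
  refine Finset.sum_congr rfl fun i _ => ?_
  rw [EuclideanSpace.inner_eq_star_dotProduct, toLpLin_apply, ← mulVec_mulVec,
    hD.mulVec_eigenvectorBasis, dotProduct_comm, mulVec_smul, dotProduct_smul]
  simp [Complex.real_smul]

lemma IsHermitian.trace_cfc {A : Matrix n n ℂ} (hA : A.IsHermitian) (f : ℝ → ℝ) :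
    (cfc f A).trace = ∑ i, (f (hA.eigenvalues i) : ℂ) := by
  rw [hA.cfc_eq, IsHermitian.cfc, Unitary.conjStarAlgAut_apply, trace_mul_cycle,
    Unitary.coe_star_mul_self, one_mul, trace_diagonal]
  rfl

lemma IsHermitian.posSemidef_cfc {A : Matrix n n ℂ} (hA : A.IsHermitian) {f : ℝ → ℝ}
    (hf : ∀ i, 0 ≤ f (hA.eigenvalues i)) : (cfc f A).PosSemidef := by
  rw [hA.cfc_eq, IsHermitian.cfc, Unitary.conjStarAlgAut_apply]
  exact (PosSemidef.diagonal fun i => by simpa using hf i).mul_mul_conjTranspose_same _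

lemma IsHermitian.traceNorm_eq_sum_abs_eigenvalues {D : Matrix n n ℂ} (hD : D.IsHermitian) :
    traceNorm D = ∑ i, |hD.eigenvalues i| := by
  have hsqrt : cfc Real.sqrt (Dᴴ * D) = cfc (fun x : ℝ => |x|) D := by
    rw [hD.eq, ← sq, ← cfc_pow_id (R := ℝ) D 2, ← cfc_comp' Real.sqrt (· ^ 2) D]
    exact cfc_congr fun x _ => Real.sqrt_sq_eq_abs x
  have h := congrArg trace hsqrt
  rw [(posSemidef_conjTranspose_mul_self D).1.trace_cfc, hD.trace_cfc] at h
  exact_mod_cast h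

lemma IsHermitian.abs_re_trace_mul_le {D : Matrix n n ℂ} (hD : D.IsHermitian)
    (hD0 : D.trace = 0) (B : Matrix n n ℂ) {a b : ℝ}
    (hB : ∀ u : n → ℂ, star u ⬝ᵥ u = 1 → (star u ⬝ᵥ B *ᵥ u).re ∈ Set.Icc a b) :
    |(B * D).trace.re| ≤ (b - a) / 2 * traceNorm D := by
  set v := fun i => ⇑(hD.eigenvectorBasis i)
  set q := fun i => (star (v i) ⬝ᵥ B *ᵥ v i).re
  have hq : ∀ i, |q i - (a + b) / 2| ≤ (b - a) / 2 := fun i => by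
    have hv : star (v i) ⬝ᵥ v i = 1 := by
      rw [dotProduct_comm, ← EuclideanSpace.inner_eq_star_dotProduct,
        hD.eigenvectorBasis.inner_eq_one]
    obtain ⟨hqa, hqb⟩ := hB _ hv
    rw [abs_le]; constructor <;> linarith
  have hsum : ∑ i, hD.eigenvalues i = 0 := by
    have := hD.trace_eq_sum_eigenvalues
    rw [hD0] at this
    simpa using (congrArg Complex.re this).symm
  -- `Tr D = 0` lets us centre the numerical range of `B` at `(a + b)/2`.
  have htrace : (B * D).trace.re = ∑ i, hD.eigenvalues i * (q i - (a + b) / 2) := by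
    simp only [hD.trace_mul_eq_sum, Complex.re_sum, Complex.re_ofReal_mul, mul_sub,
      Finset.sum_sub_distrib, ← Finset.sum_mul, hsum, zero_mul, sub_zero]
    rfl
  rw [htrace, hD.traceNorm_eq_sum_abs_eigenvalues, Finset.mul_sum]
  refine (Finset.abs_sum_le_sum_abs _ _).trans (Finset.sum_le_sum fun i _ => ?_)
  rw [abs_mul, mul_comm]
  exact mul_le_mul_of_nonneg_right (hq i) (abs_nonneg _)

lemma PosSemidef.eigenvalues_le_re_trace {A : Matrix n n ℂ} (hA : A.PosSemidef) (i : n) :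
    hA.1.eigenvalues i ≤ A.trace.re := by
  rw [hA.1.trace_eq_sum_eigenvalues, Complex.re_sum]
  simpa using Finset.single_le_sum (fun j _ => hA.eigenvalues_nonneg j) (Finset.mem_univ i)

namespace PosSemidef

variable {ρ : Matrix n n ℂ}

lemma one_sub_of_trace_eq_one (hρ : ρ.PosSemidef) (htr : ρ.trace = 1) :
    (1 - ρ).PosSemidef := by
  have : IsSelfAdjoint ρ := hρ.1
  rw [← cfc_id' ℝ ρ, ← cfc_const_one ℝ ρ, ← cfc_sub ..]
  refine hρ.1.posSemidef_cfc fun i => ?_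
  simpa [htr] using hρ.eigenvalues_le_re_trace i

lemma sub_mul_self_of_trace_eq_one (hρ : ρ.PosSemidef) (htr : ρ.trace = 1) :
    (ρ - ρ * ρ).PosSemidef := by
  have : IsSelfAdjoint ρ := hρ.1
  rw [← cfc_id' ℝ ρ, ← cfc_mul .., ← cfc_sub ..]
  refine hρ.1.posSemidef_cfc fun i => ?_
  have := hρ.eigenvalues_le_re_trace i
  rw [htr, Complex.one_re] at this
  nlinarith [hρ.eigenvalues_nonneg i]

lemma re_dotProduct_mulVec_le_one_of_trace_eq_one (hρ : ρ.PosSemidef) (htr : ρ.trace = 1)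
    {u : n → ℂ} (hu : star u ⬝ᵥ u = 1) : (star u ⬝ᵥ ρ *ᵥ u).re ≤ 1 := by
  simpa [hu] using re_dotProduct_mulVec_le_of_posSemidef_sub (hρ.one_sub_of_trace_eq_one htr) u

lemma re_trace_mul_self_mem_Icc_of_trace_eq_one (hρ : ρ.PosSemidef) (htr : ρ.trace = 1) :
    (ρ * ρ).trace.re ∈ Set.Icc 0 1 := by
  have hsq : (ρ * ρ).PosSemidef := by
    simpa only [hρ.1.eq] using posSemidef_conjTranspose_mul_self ρ
  have hle := (hρ.sub_mul_self_of_trace_eq_one htr).trace_nonneg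
  rw [trace_sub, htr] at hle
  exact ⟨(Complex.nonneg_iff.mp hsq.trace_nonneg).1,
    by simpa using (Complex.nonneg_iff.mp hle).1⟩

end PosSemidef

end Matrix

section DensityMatrix

variable {n : Type*} [Fintype n] [DecidableEq n] {ψ σ : Matrix n n ℂ}

lemma re_dotProduct_add_mulVec_mem_Icc (hψ : ψ.PosSemidef) (hψtr : ψ.trace = 1)
    (hσ : σ.PosSemidef) (hσtr : σ.trace = 1) {u : n → ℂ} (hu : star u ⬝ᵥ u = 1) :
    (star u ⬝ᵥ (ψ + σ) *ᵥ u).re ∈ Set.Icc 0 2 := by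
  have := hψ.re_dotProduct_nonneg u
  have := hσ.re_dotProduct_nonneg u
  have := hψ.re_dotProduct_mulVec_le_one_of_trace_eq_one hψtr hu
  have := hσ.re_dotProduct_mulVec_le_one_of_trace_eq_one hσtr hu
  simp only [add_mulVec, dotProduct_add, Complex.add_re, RCLike.re_to_complex] at *
  constructor <;> linarith

lemma re_dotProduct_mul_self_add_mul_add_mul_self_mulVec_mem_Icc (hψ : ψ.PosSemidef)
    (hψtr : ψ.trace = 1) (hσ : σ.PosSemidef) (hσtr : σ.trace = 1) {u : n → ℂ}
    (hu : star u ⬝ᵥ u = 1) :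
    (star u ⬝ᵥ (ψ * ψ + σ * ψ + σ * σ) *ᵥ u).re ∈ Set.Icc 0 3 := by
  have := hσ.1.two_mul_abs_re_dotProduct_mul_mulVec_le hψ.1 u
  have := neg_abs_le (star u ⬝ᵥ (σ * ψ) *ᵥ u).re
  have := le_abs_self (star u ⬝ᵥ (σ * ψ) *ᵥ u).re
  have := re_dotProduct_mulVec_le_of_posSemidef_sub (hψ.sub_mul_self_of_trace_eq_one hψtr) u
  have := re_dotProduct_mulVec_le_of_posSemidef_sub (hσ.sub_mul_self_of_trace_eq_one hσtr) u
  have := hψ.re_dotProduct_mulVec_le_one_of_trace_eq_one hψtr hu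
  have := hσ.re_dotProduct_mulVec_le_one_of_trace_eq_one hσtr hu
  simp only [add_mulVec, dotProduct_add, Complex.add_re]
  constructor <;> linarith

theorem abs_antiFlatness_sub_le (hψ : ψ.PosSemidef) (hψtr : ψ.trace = 1)
    (hσ : σ.PosSemidef) (hσtr : σ.trace = 1) :
    |antiFlatness ψ - antiFlatness σ| ≤ 7 / 2 * traceNorm (ψ - σ) := by
  have hD : (ψ - σ).IsHermitian := hψ.1.sub hσ.1
  have hD0 : (ψ - σ).trace = 0 := by rw [trace_sub, hψtr, hσtr, sub_self]
  have h2 := hD.abs_re_trace_mul_le hD0 (ψ + σ)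
    fun u hu => re_dotProduct_add_mulVec_mem_Icc hψ hψtr hσ hσtr hu
  have h3 := hD.abs_re_trace_mul_le hD0 (ψ * ψ + σ * ψ + σ * σ)
    fun u hu => re_dotProduct_mul_self_add_mul_add_mul_self_mulVec_mem_Icc hψ hψtr hσ hσtr hu
  rw [trace_add_mul_sub, Complex.sub_re] at h2
  rw [trace_mul_self_add_mul_add_mul_self_mul_sub, Complex.sub_re] at h3
  have hψ2 := hψ.re_trace_mul_self_mem_Icc_of_trace_eq_one hψtr
  have hσ2 := hσ.re_trace_mul_self_mem_Icc_of_trace_eq_one hσtr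
  rw [← sq] at hψ2 hσ2
  unfold antiFlatness
  set a := (ψ ^ 2).trace.re
  set p := (σ ^ 2).trace.re
  set b := (ψ ^ 3).trace.re
  set s := (σ ^ 3).trace.re
  set N := traceNorm (ψ - σ)
  have hN : 0 ≤ N := traceNorm_nonneg _
  have hap : |a + p| ≤ 2 :=
    abs_le.mpr ⟨by linarith [hψ2.1, hσ2.1], by linarith [hψ2.2, hσ2.2]⟩
  calc |b - a ^ 2 - (s - p ^ 2)|
      = |(b - s) - (a - p) * (a + p)| := by ring_nf
    _ ≤ |b - s| + |a - p| * |a + p| := by rw [← abs_mul]; exact abs_sub _ _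
    _ ≤ 3 / 2 * N + N * 2 := by gcongr <;> linarith
    _ = 7 / 2 * N := by ring

theorem antiFlatness_eq_zero_of_mul_self_eq_smul (htr : σ.trace = 1) {c : ℝ}
    (hflat : σ * σ = (c : ℂ) • σ) : antiFlatness σ = 0 := by
  have h3 : σ ^ 3 = (c : ℂ) • (c : ℂ) • σ := by
    rw [pow_succ, sq, hflat, smul_mul_assoc, hflat]
  rw [antiFlatness, h3, sq σ, hflat]
  simp [htr, sq]

end DensityMatrix

/-- Let `ψ` and `σ` be density matrices on `ℂ^N` with `σ` flat
(`σ² = σ / rank σ`), and let `T = (1/2)‖ψ − σ‖₁` be their trace distance. Then the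
anti-flatness of `ψ` satisfies `F(ψ) = Tr(ψ³) − (Tr(ψ²))² ≤ 8T`; consequently the
anti-flatness of any density matrix is at most `8` times its minimal trace distance to the
set of flat density matrices. -/
theorem antiFlatness_le_eight_mul_traceDist {N : ℕ} (ψ σ : Matrix (Fin N) (Fin N) ℂ)
    (hψ : ψ.PosSemidef) (hψtr : ψ.trace = 1)
    (hσ : σ.PosSemidef) (hσtr : σ.trace = 1)
    (hflat : σ * σ = ((σ.rank : ℂ))⁻¹ • σ) :
    antiFlatness ψ ≤ 8 * ((1 : ℝ) / 2 * traceNorm (ψ - σ)) ∧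
      antiFlatness ψ ≤ 8 * sInf {t : ℝ | ∃ τ : Matrix (Fin N) (Fin N) ℂ,
        τ.PosSemidef ∧ τ.trace = 1 ∧ τ * τ = ((τ.rank : ℂ))⁻¹ • τ ∧
          t = 1 / 2 * traceNorm (ψ - τ)} := by
  have hbound : ∀ τ : Matrix (Fin N) (Fin N) ℂ, τ.PosSemidef → τ.trace = 1 →
      τ * τ = ((τ.rank : ℂ))⁻¹ • τ →
        antiFlatness ψ ≤ 8 * ((1 : ℝ) / 2 * traceNorm (ψ - τ)) := by
    intro τ hτ hτtr hτflat
    have hτ0 : antiFlatness τ = 0 := antiFlatness_eq_zero_of_mul_self_eq_smul hτtr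
      (c := (τ.rank : ℝ)⁻¹) (by push_cast; exact hτflat)
    have hlip := abs_antiFlatness_sub_le hψ hψtr hτ hτtr
    linarith [le_abs_self (antiFlatness ψ - antiFlatness τ), traceNorm_nonneg (ψ - τ)]
  refine ⟨hbound σ hσ hσtr hflat, ?_⟩
  rw [← div_le_iff₀' (by norm_num : (0 : ℝ) < 8)]
  refine le_csInf ⟨_, σ, hσ, hσtr, hflat, rfl⟩ ?_
  rintro _ ⟨τ, hτ, hτtr, hτflat, rfl⟩
  linarith [hbound τ hτ hτtr hτflat]
end

section
/- Let D ≥ 1 and let λ : Fin D → ℝ be nonnegative, nonincreasing (λ_i ≥ λ_j for i ≤ j), and normalized so that Σ_{i} λ_i² = 1. Then for every m with 1 ≤ m ≤ D: 1 − (1/m)·(Σ_{i<m} λ_i)² ≤ 1 − 1/D + λ_0²·(1 − m/D), where λ_0 is the largest entry. (This is the key estimate establishing the upper bound on the non-local trace distance of magic of a bipartite pure state with Schmidt coefficients λ_i in terms of its Schmidt rank D and largest Schmidt coefficient.) -/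
/-!
The truncated sum dominates its own sum of squares, and since the squared coefficients decrease,
Chebyshev's sum inequality shows that the first `m` of them carry at least the fraction `m / D` of
the total weight `1`. Hence the left-hand side is already at most `1 - 1 / D`; the `λ₀²` term is
nonnegative.
-/

open Finset

/-- Chebyshev's sum inequality for `f` and the indicator of `s`, which vary together because `s`
is a lower set. -/
theorem Antitone.card_mul_sum_le_card_mul_sum_of_isLowerSet {ι α : Type*} [Fintype ι]
    [LinearOrder ι] [Semiring α] [LinearOrder α] [IsStrictOrderedRing α] [ExistsAddOfLE α]
    {f : ι → α} (hf : Antitone f) {s : Finset ι} (hs : IsLowerSet (s : Set ι)) :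
    #s * ∑ i, f i ≤ Fintype.card ι * ∑ i ∈ s, f i := by
  set g : ι → α := fun i => if i ∈ s then 1 else 0
  have hfg : Monovary f g := by
    intro i j hij
    simp only [g] at hij
    split_ifs at hij with hi hj hj <;> norm_num at hij
    exact hf (le_of_not_ge fun hji => hi (hs hji hj))
  have key := hfg.sum_mul_sum_le_card_mul_sum
  simp only [g, mul_ite, mul_one, mul_zero, sum_ite_mem, univ_inter, sum_const,
    nsmul_eq_mul] at key
  rwa [← Nat.cast_comm] at key

/-- Let `D ≥ 1` and `λ : Fin D → ℝ` be nonnegative, nonincreasing and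
normalized so that `Σ_i λ_i² = 1`. Then for every `m` with `1 ≤ m ≤ D`:
`1 − (1/m)·(Σ_{i<m} λ_i)² ≤ 1 − 1/D + λ_0²·(1 − m/D)`. -/
theorem schmidt_truncation_bound {D : ℕ} (lam : Fin D → ℝ)
    (hnn : ∀ i, 0 ≤ lam i) (hmono : ∀ i j : Fin D, i ≤ j → lam j ≤ lam i)
    (hnorm : ∑ i, lam i ^ 2 = 1) (m : ℕ) (hm1 : 1 ≤ m) (hmD : m ≤ D) :
    1 - (1 / (m : ℝ)) *
        (∑ i ∈ Finset.univ.filter (fun i : Fin D => (i : ℕ) < m), lam i) ^ 2 ≤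
      1 - 1 / (D : ℝ) + (lam ⟨0, by omega⟩) ^ 2 * (1 - (m : ℝ) / (D : ℝ)) := by
  set s := Finset.univ.filter (fun i : Fin D => (i : ℕ) < m)
  have hs_lower : IsLowerSet (s : Set (Fin D)) := fun i j hji hj => by
    simp only [s, coe_filter, mem_univ, true_and, Set.mem_ofPred_eq] at hj ⊢
    exact lt_of_le_of_lt hji hj
  have hs_card : #s = m := by rw [Fin.card_filter_val_lt, min_eq_right hmD]
  have hsq_anti : Antitone fun i => lam i ^ 2 := fun i j hij =>
    pow_le_pow_left₀ (hnn j) (hmono i j hij) 2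
  have hprefix : (m : ℝ) ≤ D * ∑ i ∈ s, lam i ^ 2 := by
    simpa [hs_card, hnorm] using hsq_anti.card_mul_sum_le_card_mul_sum_of_isLowerSet hs_lower
  have hsq_sum : ∑ i ∈ s, lam i ^ 2 ≤ (∑ i ∈ s, lam i) ^ 2 :=
    sum_sq_le_sq_sum_of_nonneg fun i _ => hnn i
  have hm0 : (0 : ℝ) < m := by exact_mod_cast hm1
  have hmDr : (m : ℝ) ≤ D := by exact_mod_cast hmD
  have hD0 : (0 : ℝ) < D := hm0.trans_le hmDr
  have htrunc : 1 / (D : ℝ) ≤ 1 / m * (∑ i ∈ s, lam i) ^ 2 := by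
    rw [one_div_mul_eq_div, div_le_div_iff₀ hD0 hm0, one_mul, mul_comm]
    exact hprefix.trans (mul_le_mul_of_nonneg_left hsq_sum hD0.le)
  have hrest : 0 ≤ lam ⟨0, by omega⟩ ^ 2 * (1 - (m : ℝ) / D) :=
    mul_nonneg (sq_nonneg _) (sub_nonneg.mpr ((div_le_one hD0).mpr hmDr))
  linarith
end

section
/- Fix n ≥ 1 and let λ : BitVec n → ℝ be nonnegative with Σ_i λ_i = 1. Define X(λ) = Σ_{i1,i2,i3,i4 ∈ BitVec n} √( λ_{i1} λ_{i2} λ_{i3} λ_{i4} λ_{i1⊕i2⊕i3} λ_{i1⊕i2⊕i4} λ_{i1⊕i3⊕i4} λ_{i2⊕i3⊕i4} ), where ⊕ denotes bitwise XOR. Let μ : BitVec n → ℝ be the nonincreasing rearrangement of λ with respect to the numeric order on BitVec n (μ takes the same multiset of values as λ, arranged so that μ_i ≥ μ_j whenever i ≤ j numerically). Then X(λ) ≤ X(μ); equivalently, the non-local stabilizer 2-Rényi entropy estimate M₂({λ}) = −log X(λ) attains its minimum over all orderings of the eigenvalues when the eigenvalues are in descending order. -/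
open scoped BigOperators

instance {n : ℕ} : Fintype (BitVec n) :=
  Fintype.ofEquiv (Fin (2 ^ n)) ⟨BitVec.ofFin, BitVec.toFin, fun _ => rfl, fun _ => rfl⟩

/-- The XOR sum `X(λ)` underlying the non-local stabilizer 2-Rényi entropy estimate
`M₂({λ}) = −log X(λ)`:
`X(λ) = Σ_{i1,i2,i3,i4} √(λ_{i1} λ_{i2} λ_{i3} λ_{i4} λ_{i1⊕i2⊕i3} λ_{i1⊕i2⊕i4}
λ_{i1⊕i3⊕i4} λ_{i2⊕i3⊕i4})`, where `⊕` is bitwise XOR. -/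
noncomputable def xorSum {n : ℕ} (lam : BitVec n → ℝ) : ℝ :=
  ∑ i1, ∑ i2, ∑ i3, ∑ i4,
    Real.sqrt (lam i1 * lam i2 * lam i3 * lam i4 *
      lam (i1 ^^^ i2 ^^^ i3) * lam (i1 ^^^ i2 ^^^ i4) *
      lam (i1 ^^^ i3 ^^^ i4) * lam (i2 ^^^ i3 ^^^ i4))

/-!
Put `g = √λ`, so that `X(λ) = Σ_m ∏_j g (p_j m)` where `p m` lists the eight points
`i1, i2, i3, i4, i1 ⊕ i2 ⊕ i3, …` of `m = (i1, i2, i3, i4)`. Fix `e ≠ 0` and compress along `e`: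
on each pair `{x, x ⊕ e}` put the larger value at the numerically smaller point. Shifting
each `i_k` by `s_k e` shifts `p_j m` by `e` exactly when `h_j s` holds, where `h` generates the
extended Hamming `[8,4,4]` code. With `g x = A x + B x`, `g (x ⊕ e) = A x - B x`, the sum of
the summands over these 16 shifts is `16 Σ_{w ∈ code} ∏_{j ∈ w} B_j ∏_{j ∉ w} A_j`, since the
code is self-dual. Compression keeps `A` and turns `B x` into `±|B x|`, the sign being the
top bit of `e` read in `x`; along a codeword these signs multiply to `1`, so no term decreases.

Among the rearrangements `ν` of `λ` with `X(λ) ≤ X(ν)`, one minimizing `Σ_x ν x · x.toNat` is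
nonincreasing, since otherwise a compression would lower that sum; so it is `μ`.
-/

open Finset

namespace XorSum

theorem sum_fin_four_fun {α M : Type*} [Fintype α] [AddCommMonoid M]
    (f : (Fin 4 → α) → M) : ∑ m, f m = ∑ a, ∑ b, ∑ c, ∑ d, f ![a, b, c, d] := by
  let e : α × α × α × α ≃ (Fin 4 → α) :=
    { toFun := fun x => ![x.1, x.2.1, x.2.2.1, x.2.2.2]
      invFun := fun m => (m 0, m 1, m 2, m 3)
      left_inv := fun _ => rfl
      right_inv := fun m => by ext i; fin_cases i <;> rfl }
  rw [← e.sum_comp]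
  simp only [Fintype.sum_prod_type]
  rfl

def hammingCode (s : Fin 4 → Bool) : Fin 8 → Bool :=
  ![s 0, s 1, s 2, s 3, s 0 ^^ s 1 ^^ s 2, s 0 ^^ s 1 ^^ s 3, s 0 ^^ s 2 ^^ s 3, s 1 ^^ s 2 ^^ s 3]

theorem even_sum_toNat_hammingCode (s t : Fin 4 → Bool) :
    Even (∑ j with hammingCode s j, (hammingCode t j).toNat) := by
  revert s t
  decide

theorem sum_prod_hammingCode (a b : Fin 8 → ℝ) :
    ∑ s, ∏ j, (a j + (-1) ^ (hammingCode s j).toNat * b j) =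
      16 * ∑ s, ∏ j, if hammingCode s j then b j else a j := by
  simp [sum_fin_four_fun, Fin.prod_univ_eight, hammingCode]
  ring

theorem prod_ite_le_prod_ite {ι : Type*} [Fintype ι] (c : ι → Bool) {a b b' : ι → ℝ}
    (ha : ∀ i, 0 ≤ a i) (h : ∏ i with c i, b i ≤ ∏ i with c i, b' i) :
    ∏ i, (if c i then b i else a i) ≤ ∏ i, if c i then b' i else a i := by
  rw [prod_ite, prod_ite]
  exact mul_le_mul_of_nonneg_right h (prod_nonneg fun i _ => ha i)

variable {n : ℕ}

theorem xor_xor_cancel_right (x e : BitVec n) : x ^^^ e ^^^ e = x := by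
  rw [BitVec.xor_assoc, BitVec.xor_self, BitVec.xor_zero]

theorem xor_ne_self {e : BitVec n} (he : e ≠ 0#n) (x : BitVec n) : x ^^^ e ≠ x := fun h =>
  he ((BitVec.xor_right_inj x).1 (h.trans BitVec.xor_zero.symm))

theorem toNat_lt_toNat_xor_iff {e : BitVec n} (he : e ≠ 0#n) (x : BitVec n) :
    x.toNat < (x ^^^ e).toNat ↔ x.getLsbD e.toNat.log2 = false := by
  have he' : e.toNat ≠ 0 := fun h => he (BitVec.toNat_injective h)
  have htop := Nat.testBit_log2 he'
  have hagree : ∀ j, e.toNat.log2 < j → (x.toNat ^^^ e.toNat).testBit j = x.toNat.testBit j :=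
    fun j hj => by rw [Nat.testBit_xor, Nat.testBit_eq_false_of_lt ((Nat.log2_lt he').1 hj),
      Bool.xor_false]
  rw [BitVec.toNat_xor, ← BitVec.testBit_toNat]
  cases hx : x.toNat.testBit e.toNat.log2
  · exact iff_of_true (Nat.lt_of_testBit _ hx (by simp [Nat.testBit_xor, hx, htop])
      fun j hj => (hagree j hj).symm) rfl
  · exact iff_of_false (Nat.lt_asymm (Nat.lt_of_testBit _ (by simp [Nat.testBit_xor, hx, htop])
      hx hagree)) Bool.noConfusion

def xorCube (m : Fin 4 → BitVec n) : Fin 8 → BitVec n :=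
  ![m 0, m 1, m 2, m 3, m 0 ^^^ m 1 ^^^ m 2, m 0 ^^^ m 1 ^^^ m 3, m 0 ^^^ m 2 ^^^ m 3,
    m 1 ^^^ m 2 ^^^ m 3]

theorem getLsbD_xorCube (m : Fin 4 → BitVec n) (k : ℕ) (j : Fin 8) :
    (xorCube m j).getLsbD k = hammingCode (fun i => (m i).getLsbD k) j := by
  fin_cases j <;> simp [xorCube, hammingCode]

def shift (e : BitVec n) (s : Fin 4 → Bool) (m : Fin 4 → BitVec n) : Fin 4 → BitVec n :=
  fun i => m i ^^^ if s i then e else 0#n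

theorem xorCube_shift (e : BitVec n) (s : Fin 4 → Bool) (m : Fin 4 → BitVec n) (j : Fin 8) :
    xorCube (shift e s m) j = xorCube m j ^^^ if hammingCode s j then e else 0#n := by
  have hxor (a b : Bool) :
      ((if a then e else 0#n) ^^^ if b then e else 0#n) = if (a ^^ b) then e else 0#n := by
    cases a <;> cases b <;> simp
  have hcube :
      xorCube (fun i => if s i then e else 0#n) j = if hammingCode s j then e else 0#n := by
    fin_cases j <;> simp only [xorCube, hammingCode, hxor] <;> rfl
  rw [← hcube]
  fin_cases j <;> simp only [xorCube, shift] <;> simp <;> ac_rfl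

noncomputable def cubeSum (g : BitVec n → ℝ) : ℝ := ∑ m, ∏ j, g (xorCube m j)

theorem xorSum_eq_cubeSum {lam : BitVec n → ℝ} (h : ∀ i, 0 ≤ lam i) :
    xorSum lam = cubeSum fun x => √(lam x) := by
  simp only [cubeSum, sum_fin_four_fun, ← Real.sqrt_prod _ fun _ _ => h _]
  simp [xorSum, Fin.prod_univ_eight, xorCube]

theorem sixteen_mul_cubeSum (g : BitVec n → ℝ) (e : BitVec n) :
    16 * cubeSum g = ∑ m, ∑ s, ∏ j, g (xorCube (shift e s m) j) := by
  have hshift (s : Fin 4 → Bool) : ∑ m, ∏ j, g (xorCube (shift e s m) j) = cubeSum g :=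
    Fintype.sum_bijective (shift e s)
      (Function.Involutive.bijective fun m => funext fun i => xor_xor_cancel_right _ _) _ _
      fun _ => rfl
  rw [sum_comm]
  simp [hshift]

noncomputable def evenPart (g : BitVec n → ℝ) (e x : BitVec n) : ℝ := (g x + g (x ^^^ e)) / 2

noncomputable def oddPart (g : BitVec n → ℝ) (e x : BitVec n) : ℝ := (g x - g (x ^^^ e)) / 2

theorem apply_xor_ite (g : BitVec n → ℝ) (e x : BitVec n) (b : Bool) :
    g (x ^^^ if b then e else 0#n) = evenPart g e x + (-1) ^ b.toNat * oddPart g e x := by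
  cases b <;> simp [evenPart, oddPart] <;> ring

theorem sum_prod_xorCube_shift (g : BitVec n → ℝ) (e : BitVec n) (m : Fin 4 → BitVec n) :
    ∑ s, ∏ j, g (xorCube (shift e s m) j) =
      16 * ∑ s, ∏ j, if hammingCode s j then oddPart g e (xorCube m j)
        else evenPart g e (xorCube m j) := by
  simp only [xorCube_shift, apply_xor_ite]
  exact sum_prod_hammingCode _ _

def compress {α : Type*} [LinearOrder α] (g : BitVec n → α) (e x : BitVec n) : α :=
  if x.toNat < (x ^^^ e).toNat then max (g x) (g (x ^^^ e)) else min (g x) (g (x ^^^ e))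

section compress

variable {α : Type*} [LinearOrder α] {e : BitVec n}

theorem compress_xor (he : e ≠ 0#n) (g : BitVec n → α) (x : BitVec n) :
    compress g e (x ^^^ e) =
      if x.toNat < (x ^^^ e).toNat then min (g x) (g (x ^^^ e)) else max (g x) (g (x ^^^ e)) := by
  have hne : (x ^^^ e).toNat ≠ x.toNat := fun h => xor_ne_self he x (BitVec.toNat_injective h)
  unfold compress
  rw [xor_xor_cancel_right]
  by_cases h : x.toNat < (x ^^^ e).toNat
  · rw [if_neg (by omega), if_pos h, min_comm]
  · rw [if_pos (by omega), if_neg h, max_comm]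

theorem compress_comp {β : Type*} [LinearOrder β] {f : α → β} (hf : Monotone f)
    (g : BitVec n → α) : (fun x => f (compress g e x)) = compress (fun x => f (g x)) e := by
  funext x
  unfold compress
  split_ifs
  · exact hf.map_max
  · exact hf.map_min

theorem exists_perm_compress_eq_comp (he : e ≠ 0#n) (g : BitVec n → α) :
    ∃ τ : Equiv.Perm (BitVec n), compress g e = g ∘ τ := by
  classical
  let wrong (x : BitVec n) : Prop :=
    x.toNat < (x ^^^ e).toNat ∧ g x < g (x ^^^ e) ∨
      (x ^^^ e).toNat < x.toNat ∧ g (x ^^^ e) < g x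
  have wrong_xor (x : BitVec n) : wrong (x ^^^ e) ↔ wrong x := by
    simp only [wrong, xor_xor_cancel_right]
    tauto
  let τ (x : BitVec n) : BitVec n := if wrong x then x ^^^ e else x
  have hτ : Function.Involutive τ := fun x => by
    by_cases h : wrong x
    · simp only [τ, if_pos h, if_pos ((wrong_xor x).2 h), xor_xor_cancel_right]
    · simp only [τ, if_neg h]
  refine ⟨hτ.toPerm, funext fun x => ?_⟩
  have hne : (x ^^^ e).toNat ≠ x.toNat := fun h => xor_ne_self he x (BitVec.toNat_injective h)
  change compress g e x = g (if wrong x then x ^^^ e else x)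
  unfold compress
  by_cases hl : x.toNat < (x ^^^ e).toNat
  · by_cases hv : g x < g (x ^^^ e)
    · rw [if_pos hl, if_pos (Or.inl ⟨hl, hv⟩), max_eq_right hv.le]
    · rw [if_pos hl, if_neg (by have := Nat.lt_asymm hl; tauto), max_eq_left (not_lt.1 hv)]
  · by_cases hv : g (x ^^^ e) < g x
    · rw [if_neg hl, if_pos (Or.inr ⟨by omega, hv⟩), min_eq_right hv.le]
    · rw [if_neg hl, if_neg (by tauto), min_eq_left (not_lt.1 hv)]

end compress

theorem compress_add_compress_xor {e : BitVec n} (he : e ≠ 0#n) (g : BitVec n → ℝ)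
    (x : BitVec n) : compress g e x + compress g e (x ^^^ e) = g x + g (x ^^^ e) := by
  rw [compress_xor he]
  unfold compress
  split_ifs
  · exact max_add_min _ _
  · exact min_add_max _ _

theorem evenPart_compress {e : BitVec n} (he : e ≠ 0#n) (g : BitVec n → ℝ) :
    evenPart (compress g e) e = evenPart g e :=
  funext fun x => by simp only [evenPart, compress_add_compress_xor he]

theorem oddPart_compress {e : BitVec n} (he : e ≠ 0#n) (g : BitVec n → ℝ) (x : BitVec n) :
    oddPart (compress g e) e x = (-1) ^ (x.getLsbD e.toNat.log2).toNat * |oddPart g e x| := by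
  rw [oddPart, compress_xor he, oddPart, compress, abs_div, abs_two]
  by_cases h : x.toNat < (x ^^^ e).toNat
  · rw [if_pos h, if_pos h, (toNat_lt_toNat_xor_iff he x).1 h, max_sub_min_eq_abs, abs_sub_comm]
    simp
  · have hb : x.getLsbD e.toNat.log2 = true := by
      simpa using (toNat_lt_toNat_xor_iff he x).not.1 h
    rw [if_neg h, if_neg h, hb, ← neg_sub, max_sub_min_eq_abs, abs_sub_comm]
    simp [neg_div]

theorem prod_oddPart_le_prod_oddPart_compress {e : BitVec n} (he : e ≠ 0#n)
    (g : BitVec n → ℝ) (m : Fin 4 → BitVec n) (s : Fin 4 → Bool) :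
    ∏ j with hammingCode s j, oddPart g e (xorCube m j) ≤
      ∏ j with hammingCode s j, oddPart (compress g e) e (xorCube m j) := by
  simp only [oddPart_compress he, prod_mul_distrib, prod_pow_eq_pow_sum, getLsbD_xorCube,
    (even_sum_toNat_hammingCode s _).neg_one_pow, one_mul, ← abs_prod]
  exact le_abs_self _

theorem cubeSum_le_cubeSum_compress {g : BitVec n → ℝ} (hg : ∀ x, 0 ≤ g x) {e : BitVec n}
    (he : e ≠ 0#n) : cubeSum g ≤ cubeSum (compress g e) := by
  have h16 : 16 * cubeSum g ≤ 16 * cubeSum (compress g e) := by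
    rw [sixteen_mul_cubeSum g e, sixteen_mul_cubeSum (compress g e) e]
    refine sum_le_sum fun m _ => ?_
    rw [sum_prod_xorCube_shift, sum_prod_xorCube_shift, evenPart_compress he]
    refine mul_le_mul_of_nonneg_left (sum_le_sum fun s _ => ?_) (by norm_num)
    exact prod_ite_le_prod_ite _ (fun j => div_nonneg (add_nonneg (hg _) (hg _)) zero_le_two)
      (prod_oddPart_le_prod_oddPart_compress he g m s)
  linarith

theorem xorSum_le_xorSum_compress {lam : BitVec n → ℝ} (hlam : ∀ x, 0 ≤ lam x)
    {e : BitVec n} (he : e ≠ 0#n) : xorSum lam ≤ xorSum (compress lam e) := by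
  have hc (x : BitVec n) : 0 ≤ compress lam e x := by
    unfold compress
    split_ifs
    · exact le_max_of_le_left (hlam x)
    · exact le_min (hlam x) (hlam _)
  rw [xorSum_eq_cubeSum hlam, xorSum_eq_cubeSum hc, compress_comp Real.sqrt_monotone]
  exact cubeSum_le_cubeSum_compress (fun _ => Real.sqrt_nonneg _) he

theorem sum_compress_mul_toNat_lt {e : BitVec n} (he : e ≠ 0#n) {g : BitVec n → ℝ}
    {x₀ : BitVec n} (hx₀ : x₀.toNat < (x₀ ^^^ e).toNat) (hg : g x₀ < g (x₀ ^^^ e)) :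
    ∑ x, compress g e x * x.toNat < ∑ x, g x * x.toNat := by
  let d (x : BitVec n) : ℝ := (compress g e x - g x) * x.toNat
  have hpair : 2 * ∑ x, d x =
      ∑ x, (compress g e x - g x) * ((x.toNat : ℝ) - (x ^^^ e).toNat) := by
    have hshift : ∑ x, d (x ^^^ e) = ∑ x, d x :=
      Fintype.sum_bijective _ (Function.Involutive.bijective fun x => xor_xor_cancel_right x e)
        _ _ fun _ => rfl
    rw [two_mul]
    nth_rw 2 [← hshift]
    rw [← sum_add_distrib]
    refine sum_congr rfl fun x _ => ?_
    simp only [d]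
    linear_combination (x ^^^ e).toNat * compress_add_compress_xor he g x
  have hle (x : BitVec n) :
      (compress g e x - g x) * ((x.toNat : ℝ) - (x ^^^ e).toNat) ≤ 0 := by
    unfold compress
    split_ifs with h
    · exact mul_nonpos_of_nonneg_of_nonpos (sub_nonneg.2 (le_max_left _ _))
        (sub_nonpos.2 (by exact_mod_cast h.le))
    · exact mul_nonpos_of_nonpos_of_nonneg (sub_nonpos.2 (min_le_left _ _))
        (sub_nonneg.2 (by exact_mod_cast not_lt.1 h))
  have hlt : (compress g e x₀ - g x₀) * ((x₀.toNat : ℝ) - (x₀ ^^^ e).toNat) < 0 := by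
    rw [compress, if_pos hx₀, max_eq_right hg.le]
    exact mul_neg_of_pos_of_neg (sub_pos.2 hg) (sub_neg.2 (by exact_mod_cast hx₀))
  have hneg : ∑ x, d x < 0 := by
    have := sum_lt_sum (fun x _ => hle x) ⟨x₀, mem_univ _, hlt⟩
    simp only [sum_const_zero] at this
    linarith
  simp only [d, sub_mul, sum_sub_distrib] at hneg
  linarith

theorem eq_of_antitone_of_eq_comp {α : Type*} [PartialOrder α] {f g : BitVec n → α}
    (σ : Equiv.Perm (BitVec n)) (hfg : f = g ∘ σ)
    (hf : ∀ i j : BitVec n, i.toNat ≤ j.toNat → f j ≤ f i)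
    (hg : ∀ i j : BitVec n, i.toNat ≤ j.toNat → g j ≤ g i) : f = g := by
  let E : BitVec n ≃ Fin (2 ^ n) := BitVec.equivFin.toEquiv
  have hE (h : BitVec n → α) (hh : ∀ i j : BitVec n, i.toNat ≤ j.toNat → h j ≤ h i) :
      Antitone (h ∘ E.symm) := fun i j hij => hh _ _ hij
  have hσ : (g ∘ E.symm) ∘ (E.symm.trans σ).trans E = f ∘ E.symm := by
    ext i
    simp [hfg]
  have key := Tuple.unique_antitone (σ := (E.symm.trans σ).trans E) (τ := 1)
    (hσ ▸ hE f hf) (hE g hg)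
  rw [hσ] at key
  ext x
  simpa using congrFun key (E x)

theorem exists_perm_antitone_xorSum_le (lam : BitVec n → ℝ) (hlam : ∀ i, 0 ≤ lam i) :
    ∃ p : Equiv.Perm (BitVec n), xorSum lam ≤ xorSum (lam ∘ p) ∧
      ∀ i j : BitVec n, i.toNat ≤ j.toNat → lam (p j) ≤ lam (p i) := by
  classical
  obtain ⟨p, hp, hmin⟩ := exists_min_image
    (univ.filter fun p : Equiv.Perm (BitVec n) => xorSum lam ≤ xorSum (lam ∘ p))
    (fun p => ∑ x, lam (p x) * x.toNat) ⟨1, by simp⟩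
  refine ⟨p, (mem_filter.1 hp).2, ?_⟩
  by_contra! ⟨x, y, hxy, hlt⟩
  have hne : x ≠ y := by rintro rfl; exact lt_irrefl _ hlt
  have hy : x ^^^ (x ^^^ y) = y := by rw [← BitVec.xor_assoc, BitVec.xor_self, BitVec.zero_xor]
  have he : x ^^^ y ≠ 0#n := fun h => hne (BitVec.xor_eq_zero_iff.1 h)
  obtain ⟨τ, hτ⟩ := exists_perm_compress_eq_comp he (lam ∘ p)
  have hmem : xorSum lam ≤ xorSum (lam ∘ (τ.trans p)) := by
    rw [Equiv.coe_trans, ← Function.comp_assoc, ← hτ]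
    exact (mem_filter.1 hp).2.trans (xorSum_le_xorSum_compress (fun _ => hlam _) he)
  have hge := hmin _ (mem_filter.2 ⟨mem_univ _, hmem⟩)
  have hlt' := sum_compress_mul_toNat_lt he (g := lam ∘ p) (x₀ := x)
    (by rw [hy]; exact lt_of_le_of_ne hxy fun h => hne (BitVec.toNat_injective h))
    (by rw [hy]; exact hlt)
  rw [hτ] at hlt'
  exact lt_irrefl _ (hlt'.trans_le hge)

end XorSum

theorem xorSum_le_xorSum_of_sorted_general {n : ℕ} (lam mu : BitVec n → ℝ)
    (hnn : ∀ i, 0 ≤ lam i)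
    (hperm : ∃ e : Equiv.Perm (BitVec n), ∀ i, mu i = lam (e i))
    (hmono : ∀ i j : BitVec n, i.toNat ≤ j.toNat → mu j ≤ mu i) :
    xorSum lam ≤ xorSum mu := by
  obtain ⟨q, hq⟩ := hperm
  obtain ⟨p, hle, hanti⟩ := XorSum.exists_perm_antitone_xorSum_le lam hnn
  have hmu : lam ∘ p = mu :=
    XorSum.eq_of_antitone_of_eq_comp (p.trans q.symm) (funext fun i => by simp [hq]) hanti hmono
  rwa [← hmu]

/-- Fix `n ≥ 1` and a nonnegative `λ : BitVec n → ℝ` with `Σ_i λ_i = 1`.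
If `μ` is the nonincreasing rearrangement of `λ` with respect to the numeric order on
`BitVec n` (same multiset of values, `μ_i ≥ μ_j` whenever `i ≤ j` numerically), then
`X(λ) ≤ X(μ)`; i.e. the non-local stabilizer 2-Rényi entropy estimate `−log X` is minimized
when the eigenvalues are in descending order. -/
theorem xorSum_le_xorSum_of_sorted {n : ℕ} (hn : 1 ≤ n) (lam mu : BitVec n → ℝ)
    (hnn : ∀ i, 0 ≤ lam i) (hsum : ∑ i, lam i = 1)
    (hperm : ∃ e : Equiv.Perm (BitVec n), ∀ i, mu i = lam (e i))
    (hmono : ∀ i j : BitVec n, i.toNat ≤ j.toNat → mu j ≤ mu i) :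
    xorSum lam ≤ xorSum mu :=
  xorSum_le_xorSum_of_sorted_general lam mu hnn hperm hmono
end

section
/- Fix n ≥ 1 and let λ : BitVec n → ℝ be nonnegative, nonincreasing with respect to the numeric order on BitVec n, and satisfy Σ_i λ_i = 1. Then the non-local stabilizer 2-Rényi entropy estimate satisfies M₂({λ}) = −log X(λ) ≤ min{ 2·S₂ , 4·(S_max − S_{1/2}) }, where S₂ = −log(Σ_i λ_i²), S_max = n·log 2, and S_{1/2} = 2·log(Σ_i √λ_i). Equivalently, X(λ) ≥ (Σ_i λ_i²)² and X(λ) ≥ (Σ_i √λ_i)⁸ / 2^{4n}. -/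
open scoped BigOperators

lemma bv_xor_left_comm {n : ℕ} (a b c : BitVec n) : a ^^^ (b ^^^ c) = b ^^^ (a ^^^ c) := by
  rw [← BitVec.xor_assoc, BitVec.xor_comm a b, BitVec.xor_assoc]

lemma bv_xor_cancel {n : ℕ} (a b : BitVec n) : a ^^^ (a ^^^ b) = b := by
  rw [← BitVec.xor_assoc, BitVec.xor_self, BitVec.zero_xor]

lemma bv_sum_xor {n : ℕ} (a : BitVec n) (f : BitVec n → ℝ) :
    ∑ x, f (a ^^^ x) = ∑ x, f x := by
  have hinv : Function.Involutive (fun x : BitVec n => a ^^^ x) := fun x => bv_xor_cancel a x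
  exact Equiv.sum_comp hinv.toPerm f

lemma sqrt8 {a b c d e f g h : ℝ} (ha : 0 ≤ a) (hb : 0 ≤ b) (hc : 0 ≤ c)
    (hd : 0 ≤ d) (he : 0 ≤ e) (hf : 0 ≤ f) (hg : 0 ≤ g) :
    Real.sqrt (a*b*c*d*e*f*g*h) =
      Real.sqrt a * Real.sqrt b * Real.sqrt c * Real.sqrt d *
      Real.sqrt e * Real.sqrt f * Real.sqrt g * Real.sqrt h := by
  rw [Real.sqrt_mul (by positivity), Real.sqrt_mul (by positivity),
      Real.sqrt_mul (by positivity), Real.sqrt_mul (by positivity),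
      Real.sqrt_mul (by positivity), Real.sqrt_mul (by positivity),
      Real.sqrt_mul ha]

/-- the key structural identity: `X(λ) = Σ_{s,u} K(s,u)²`. -/
lemma xorSum_eq_sum_sq {n : ℕ} (lam : BitVec n → ℝ) (hnn : ∀ i, 0 ≤ lam i) :
    xorSum lam = ∑ s, ∑ u,
      (∑ x, Real.sqrt (lam x) * Real.sqrt (lam (x ^^^ s)) * Real.sqrt (lam (x ^^^ u)) *
        Real.sqrt (lam (x ^^^ s ^^^ u))) ^ 2 := by
  set g : BitVec n → ℝ := fun i => Real.sqrt (lam i) with hg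
  have step1 : xorSum lam = ∑ i1, ∑ i2, ∑ i3, ∑ i4,
      g i1 * g i2 * g i3 * g i4 * g (i1 ^^^ i2 ^^^ i3) * g (i1 ^^^ i2 ^^^ i4) *
      g (i1 ^^^ i3 ^^^ i4) * g (i2 ^^^ i3 ^^^ i4) := by
    unfold xorSum
    refine Finset.sum_congr rfl fun i1 _ => Finset.sum_congr rfl fun i2 _ =>
      Finset.sum_congr rfl fun i3 _ => Finset.sum_congr rfl fun i4 _ => ?_
    exact sqrt8 (hnn _) (hnn _) (hnn _) (hnn _) (hnn _) (hnn _) (hnn _)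
  rw [step1]
  -- substitute i2 = i1 ^^^ s, i3 = i1 ^^^ u
  have step2 : ∀ i1 : BitVec n, (∑ i2, ∑ i3, ∑ i4,
      g i1 * g i2 * g i3 * g i4 * g (i1 ^^^ i2 ^^^ i3) * g (i1 ^^^ i2 ^^^ i4) *
      g (i1 ^^^ i3 ^^^ i4) * g (i2 ^^^ i3 ^^^ i4)) =
      ∑ s, ∑ u, ∑ i4,
      (g i1 * g (i1 ^^^ s) * g (i1 ^^^ u) * g (i1 ^^^ s ^^^ u)) *
      (g i4 * g (i4 ^^^ s) * g (i4 ^^^ u) * g (i4 ^^^ s ^^^ u)) := by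
    intro i1
    rw [← bv_sum_xor i1 (fun i2 => ∑ i3, ∑ i4,
      g i1 * g i2 * g i3 * g i4 * g (i1 ^^^ i2 ^^^ i3) * g (i1 ^^^ i2 ^^^ i4) *
      g (i1 ^^^ i3 ^^^ i4) * g (i2 ^^^ i3 ^^^ i4))]
    refine Finset.sum_congr rfl fun s _ => ?_
    rw [← bv_sum_xor i1 (fun i3 => ∑ i4,
      g i1 * g (i1 ^^^ s) * g i3 * g i4 * g (i1 ^^^ (i1 ^^^ s) ^^^ i3) *
      g (i1 ^^^ (i1 ^^^ s) ^^^ i4) * g (i1 ^^^ i3 ^^^ i4) * g ((i1 ^^^ s) ^^^ i3 ^^^ i4))]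
    refine Finset.sum_congr rfl fun u _ => Finset.sum_congr rfl fun i4 _ => ?_
    have e1 : i1 ^^^ (i1 ^^^ s) ^^^ (i1 ^^^ u) = i1 ^^^ s ^^^ u := by
      simp [BitVec.xor_assoc, BitVec.xor_comm, bv_xor_left_comm, bv_xor_cancel]
    have e2 : i1 ^^^ (i1 ^^^ s) ^^^ i4 = i4 ^^^ s := by
      simp [BitVec.xor_assoc, BitVec.xor_comm, bv_xor_left_comm, bv_xor_cancel]
    have e3 : i1 ^^^ (i1 ^^^ u) ^^^ i4 = i4 ^^^ u := by
      simp [BitVec.xor_assoc, BitVec.xor_comm, bv_xor_left_comm, bv_xor_cancel]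
    have e4 : (i1 ^^^ s) ^^^ (i1 ^^^ u) ^^^ i4 = i4 ^^^ s ^^^ u := by
      simp [BitVec.xor_assoc, BitVec.xor_comm, bv_xor_left_comm, bv_xor_cancel]
    rw [e1, e2, e3, e4]
    ring
  simp only [step2]
  -- now reorder sums and fold squares
  rw [Finset.sum_comm]
  refine Finset.sum_congr rfl fun s _ => ?_
  rw [Finset.sum_comm]
  refine Finset.sum_congr rfl fun u _ => ?_
  rw [sq, Finset.sum_mul_sum]

/-- Fix `n ≥ 1` and let `λ : BitVec n → ℝ` be nonnegative, nonincreasing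
with respect to the numeric order, with `Σ_i λ_i = 1`. Then the non-local stabilizer 2-Rényi
entropy estimate satisfies `M₂({λ}) = −log X(λ) ≤ min{2·S₂, 4·(S_max − S_{1/2})}`, where
`S₂ = −log(Σ_i λ_i²)`, `S_max = n·log 2` and `S_{1/2} = 2·log(Σ_i √λ_i)`. -/
theorem neg_log_xorSum_le_min {n : ℕ} (hn : 1 ≤ n) (lam : BitVec n → ℝ)
    (hnn : ∀ i, 0 ≤ lam i) (hmono : ∀ i j : BitVec n, i.toNat ≤ j.toNat → lam j ≤ lam i)
    (hsum : ∑ i, lam i = 1) :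
    -Real.log (xorSum lam) ≤
      min (2 * -Real.log (∑ i, lam i ^ 2))
        (4 * ((n : ℝ) * Real.log 2 - 2 * Real.log (∑ i, Real.sqrt (lam i)))) := by
  classical
  set g : BitVec n → ℝ := fun i => Real.sqrt (lam i) with hgdef
  have hgnn : ∀ i, 0 ≤ g i := fun i => Real.sqrt_nonneg _
  have hgg : ∀ i, g i * g i = lam i := fun i => Real.mul_self_sqrt (hnn i)
  set K : BitVec n → BitVec n → ℝ := fun s u =>
    ∑ x, g x * g (x ^^^ s) * g (x ^^^ u) * g (x ^^^ s ^^^ u) with hKdef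
  have hX : xorSum lam = ∑ s, ∑ u, (K s u) ^ 2 := xorSum_eq_sum_sq lam hnn
  have hKnn : ∀ s u, 0 ≤ K s u := fun s u =>
    Finset.sum_nonneg fun x _ => by
      have := hgnn x; have := hgnn (x ^^^ s); have := hgnn (x ^^^ u)
      have := hgnn (x ^^^ s ^^^ u); positivity
  -- zero xor
  have hz : ∀ x : BitVec n, x ^^^ (0 : BitVec n) = x := fun x => by
    simpa using BitVec.xor_zero (x := x)
  -- Bound 1 : (∑ λ²)² ≤ X
  have hK00 : K (0 : BitVec n) (0 : BitVec n) = ∑ i, lam i ^ 2 := by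
    simp only [hKdef, hz]
    refine Finset.sum_congr rfl fun x _ => ?_
    have : g x * g x * g x * g x = (g x * g x) * (g x * g x) := by ring
    rw [this, hgg, sq]
  have h1 : (∑ i, lam i ^ 2) ^ 2 ≤ xorSum lam := by
    rw [hX, ← hK00]
    calc K 0 0 ^ 2 ≤ ∑ u, (K 0 u) ^ 2 :=
          Finset.single_le_sum (f := fun u => (K 0 u) ^ 2)
            (fun u _ => sq_nonneg _) (Finset.mem_univ (0 : BitVec n))
      _ ≤ ∑ s, ∑ u, (K s u) ^ 2 :=
          Finset.single_le_sum (f := fun s => ∑ u, (K s u) ^ 2)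
            (fun s _ => Finset.sum_nonneg fun u _ => sq_nonneg _)
            (Finset.mem_univ (0 : BitVec n))
  -- Bound 2 setup
  set H : BitVec n → ℝ := fun s => ∑ x, g x * g (x ^^^ s) with hHdef
  have hHnn : ∀ s, 0 ≤ H s := fun s =>
    Finset.sum_nonneg fun x _ => mul_nonneg (hgnn x) (hgnn _)
  have hKH : ∀ s, (∑ u, K s u) = H s ^ 2 := by
    intro s
    simp only [hKdef]
    rw [Finset.sum_comm]
    have : ∀ x : BitVec n,
        (∑ u, g x * g (x ^^^ s) * g (x ^^^ u) * g (x ^^^ s ^^^ u)) =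
        (g x * g (x ^^^ s)) * H s := by
      intro x
      have hterm : ∀ u : BitVec n,
          g x * g (x ^^^ s) * g (x ^^^ u) * g (x ^^^ s ^^^ u) =
          (g x * g (x ^^^ s)) * (g (x ^^^ u) * g ((x ^^^ u) ^^^ s)) := by
        intro u
        have : x ^^^ s ^^^ u = (x ^^^ u) ^^^ s := by
          simp [BitVec.xor_assoc, BitVec.xor_comm, bv_xor_left_comm, bv_xor_cancel]
        rw [this]; ring
      simp only [hterm]
      rw [← Finset.mul_sum, bv_sum_xor x (fun w => g w * g (w ^^^ s))]
    simp only [this]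
    rw [← Finset.sum_mul, hHdef, sq]
  have hHsum : (∑ s, H s) = (∑ i, g i) ^ 2 := by
    simp only [hHdef]
    rw [Finset.sum_comm]
    have : ∀ x : BitVec n, (∑ s, g x * g (x ^^^ s)) = g x * ∑ i, g i := by
      intro x
      rw [← Finset.mul_sum, bv_sum_xor x g]
    simp only [this]
    rw [← Finset.sum_mul, sq]
  -- cardinalities
  have hcardB : (Fintype.card (BitVec n)) = 2 ^ n := by
    rw [Fintype.card_congr ⟨BitVec.toFin, BitVec.ofFin, fun _ => rfl, fun _ => rfl⟩,
      Fintype.card_fin]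
  -- Cauchy–Schwarz 2 : (∑ H)² ≤ 2^n * ∑ H²
  have hcs2 : (∑ s, H s) ^ 2 ≤ (2 : ℝ) ^ n * ∑ s, H s ^ 2 := by
    have := sq_sum_le_card_mul_sum_sq (s := (Finset.univ : Finset (BitVec n))) (f := H)
    simpa [Finset.card_univ, hcardB] using this
  -- Cauchy–Schwarz 1 : (∑∑ K)² ≤ 2^n * 2^n * ∑∑ K²
  have hcs1 : (∑ s, ∑ u, K s u) ^ 2 ≤ ((2 : ℝ) ^ n * (2 : ℝ) ^ n) * ∑ s, ∑ u, (K s u) ^ 2 := by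
    have := sq_sum_le_card_mul_sum_sq (s := (Finset.univ : Finset (BitVec n × BitVec n)))
      (f := fun p => K p.1 p.2)
    simpa [Finset.card_univ, hcardB, Fintype.sum_prod_type] using this
  set A : ℝ := ∑ i, g i with hA
  have hAnn : 0 ≤ A := Finset.sum_nonneg fun i _ => hgnn i
  have hBnn : 0 ≤ ∑ s, H s ^ 2 := Finset.sum_nonneg fun s _ => sq_nonneg _
  have hp : (0 : ℝ) < 2 ^ n := by positivity
  -- Bound 2 : A^8 / 2^(4n) ≤ X
  have h2 : A ^ 8 / (2 : ℝ) ^ (4 * n) ≤ xorSum lam := by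
    have h4 : A ^ 4 ≤ 2 ^ n * ∑ s, H s ^ 2 := by
      have : (A ^ 2) ^ 2 ≤ 2 ^ n * ∑ s, H s ^ 2 := by rw [← hHsum]; exact hcs2
      calc A ^ 4 = (A ^ 2) ^ 2 := by ring
        _ ≤ _ := this
    have h5 : (∑ s, H s ^ 2) ^ 2 ≤ (2 ^ n * 2 ^ n) * xorSum lam := by
      rw [hX]
      have : (∑ s, ∑ u, K s u) = ∑ s, H s ^ 2 := by
        refine Finset.sum_congr rfl fun s _ => hKH s
      rw [← this]
      exact hcs1
    have h6 : A ^ 8 ≤ (2 ^ n * ∑ s, H s ^ 2) ^ 2 := by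
      calc A ^ 8 = (A ^ 4) ^ 2 := by ring
        _ ≤ (2 ^ n * ∑ s, H s ^ 2) ^ 2 := by
            apply pow_le_pow_left₀ (by positivity) h4
    have h7 : A ^ 8 ≤ (2:ℝ) ^ (4 * n) * xorSum lam := by
      have e : ((2:ℝ) ^ n * ∑ s, H s ^ 2) ^ 2 = (2^n * 2^n) * (∑ s, H s ^ 2)^2 := by ring
      have h8 : ((2:ℝ) ^ n * ∑ s, H s ^ 2) ^ 2 ≤ (2^n*2^n) * ((2 ^ n * 2 ^ n) * xorSum lam) := by
        rw [e]
        exact mul_le_mul_of_nonneg_left h5 (by positivity)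
      have e2 : ((2:ℝ)^n*2^n) * ((2 ^ n * 2 ^ n) * xorSum lam) = 2 ^ (4*n) * xorSum lam := by
        rw [show 4 * n = n + (n + (n + n)) by ring, pow_add, pow_add, pow_add]; ring
      linarith
    rw [div_le_iff₀ (by positivity)]
    linarith
  -- positivity facts
  have hex : ∃ i, lam i ≠ 0 := by
    by_contra h
    push_neg at h
    simp [h] at hsum
  obtain ⟨i0, hi0⟩ := hex
  have hlpos : 0 < lam i0 := lt_of_le_of_ne (hnn i0) (Ne.symm hi0)
  have hs2pos : 0 < ∑ i, lam i ^ 2 :=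
    Finset.sum_pos' (fun j _ => sq_nonneg _) ⟨i0, Finset.mem_univ i0, by positivity⟩
  have hApos : 0 < A :=
    Finset.sum_pos' (fun j _ => hgnn j) ⟨i0, Finset.mem_univ i0, Real.sqrt_pos.2 hlpos⟩
  have hXpos : 0 < xorSum lam := lt_of_lt_of_le (by positivity) h1
  refine le_min ?_ ?_
  · -- -log X ≤ 2 * -log(∑λ²)
    have := Real.log_le_log (by positivity) h1
    rw [Real.log_pow] at this
    push_cast at this
    linarith
  · -- -log X ≤ 4 (n log 2 - 2 log A)
    have hlog := Real.log_le_log (by positivity) h2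
    rw [Real.log_div (by positivity) (by positivity), Real.log_pow, Real.log_pow] at hlog
    push_cast at hlog
    linarith
end

section
/- Let p : Fin N → ℝ be a probability vector, let 0 ≤ ε < 1, and let T ⊆ Fin N be a subset with t := Σ_{i∈T} p_i ≥ 1 − ε > 0. Let q be the renormalized distribution q_i = p_i / t for i ∈ T (and 0 otherwise). Then the Shannon entropies satisfy H(q) ≤ H(p) / (1 − ε), where H(p) = −Σ_i p_i log p_i with the convention 0·log 0 = 0. (This is the entropy bound for the truncated, renormalized state used in the proof of the smoothed non-local magic bounds.) -/
open scoped BigOperators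

/-- Let `p : Fin N → ℝ` be a probability vector, `0 ≤ ε < 1`, and
`T ⊆ Fin N` with `t := Σ_{i∈T} p_i ≥ 1 − ε > 0`. Let `q` be the renormalized distribution
`q_i = p_i / t` for `i ∈ T` (and `0` otherwise). Then the Shannon entropies
(`H(p) = Σ_i negMulLog (p_i) = −Σ_i p_i log p_i`, with `0·log 0 = 0`) satisfy
`H(q) ≤ H(p) / (1 − ε)`. -/
theorem entropy_renormalized_le {N : ℕ} (p : Fin N → ℝ) (hnn : ∀ i, 0 ≤ p i)
    (hsum : ∑ i, p i = 1) (ε : ℝ) (hε0 : 0 ≤ ε) (hε1 : ε < 1) (T : Finset (Fin N))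
    (ht : 1 - ε ≤ ∑ i ∈ T, p i) :
    ∑ i, Real.negMulLog (if i ∈ T then p i / (∑ j ∈ T, p j) else 0) ≤
      (∑ i, Real.negMulLog (p i)) / (1 - ε) := by
  set t := ∑ j ∈ T, p j with htdef
  have ht0 : 0 < t := lt_of_lt_of_le (by linarith) ht
  have ht1 : t ≤ 1 := by
    rw [← hsum]
    exact Finset.sum_le_sum_of_subset_of_nonneg (Finset.subset_univ T) (fun i _ _ => hnn i)
  have hple : ∀ i, p i ≤ 1 := fun i => by
    rw [← hsum]; exact Finset.single_le_sum (fun j _ => hnn j) (Finset.mem_univ i)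
  have hnml : ∀ i, 0 ≤ Real.negMulLog (p i) := fun i =>
    Real.negMulLog_nonneg (hnn i) (hple i)
  have hH : 0 ≤ ∑ i, Real.negMulLog (p i) :=
    Finset.sum_nonneg fun i _ => hnml i
  have hsplit : ∑ i, Real.negMulLog (if i ∈ T then p i / t else 0)
      = ∑ i ∈ T, Real.negMulLog (p i / t) := by
    have : ∀ i, Real.negMulLog (if i ∈ T then p i / t else 0)
        = if i ∈ T then Real.negMulLog (p i / t) else 0 := by
      intro i; split_ifs <;> simp [Real.negMulLog_zero]
    simp_rw [this]
    rw [Finset.sum_ite_mem, Finset.univ_inter]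
  have hterm : ∀ i ∈ T, Real.negMulLog (p i / t)
      = Real.negMulLog (p i) / t + (p i / t) * Real.log t := by
    intro i _
    rcases eq_or_lt_of_le (hnn i) with h | h
    · simp [← h, Real.negMulLog_zero, Real.negMulLog]
    · rw [Real.negMulLog, Real.negMulLog, Real.log_div (ne_of_gt h) (ne_of_gt ht0)]
      field_simp
      ring
  have hsum2 : ∑ i ∈ T, Real.negMulLog (p i / t)
      = (∑ i ∈ T, Real.negMulLog (p i)) / t + Real.log t := by
    rw [Finset.sum_congr rfl hterm, Finset.sum_add_distrib, ← Finset.sum_div,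
      ← Finset.sum_mul, ← Finset.sum_div, ← htdef, div_self (ne_of_gt ht0), one_mul]
  have hlogt : Real.log t ≤ 0 := Real.log_nonpos (le_of_lt ht0) ht1
  have hST : ∑ i ∈ T, Real.negMulLog (p i) ≤ ∑ i, Real.negMulLog (p i) :=
    Finset.sum_le_sum_of_subset_of_nonneg (Finset.subset_univ T) (fun i _ _ => hnml i)
  calc ∑ i, Real.negMulLog (if i ∈ T then p i / t else 0)
      = (∑ i ∈ T, Real.negMulLog (p i)) / t + Real.log t := by rw [hsplit, hsum2]
    _ ≤ (∑ i, Real.negMulLog (p i)) / t := by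
        have : (∑ i ∈ T, Real.negMulLog (p i)) / t ≤ (∑ i, Real.negMulLog (p i)) / t :=
          div_le_div_of_nonneg_right hST ht0.le
        linarith
    _ ≤ (∑ i, Real.negMulLog (p i)) / (1 - ε) := by
        gcongr
end

section
/- For every x ∈ (0,1), the non-local stabilizer 2-Rényi entropy of a single entangled pair of qubits with spectrum (x, 1−x), namely M₂(x) = −log(1 − 4x + 20x² − 32x³ + 16x⁴), is sandwiched between the two anti-flatness measures: x²(1−x)²·(log(x/(1−x)))² / (x² + (1−x)²)² ≤ −log(1 − 4x + 20x² − 32x³ + 16x⁴) ≤ x(1−x)·(log(x/(1−x)))². (In the paper's notation, −(1/2)·∂_n S̃_n|_{n=2} ≤ M₂ ≤ −∂_n S̃_n|_{n=1} for a pair of qubits with entanglement spectrum {x, 1−x}.) -/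
/-!
Substitute `s = 1 - 2x ∈ (-1, 1)`: then `log (x / (1 - x)) ^ 2 = 4 artanh s ^ 2`,
`x (1 - x) = (1 - s²) / 4`, and the polynomial becomes `q = 1 - s² + s⁴ ∈ [3/4, 1]`.
For the lower bound, `|y| ≤ |sinh y|` at `y = artanh s` gives `artanh s ^ 2 ≤ s² / (1 - s²)`,
and `1 - q ≤ -log q`. For the upper bound, `sinh (log q) ≤ log q` gives
`-log q ≤ (q⁻¹ - q) / 2`, and the first two terms of the (odd, sign-constant) artanh series
give `(s + s³ / 3) ^ 2 ≤ artanh s ^ 2`. Both then reduce to polynomial inequalities in `s²`.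
-/

open Set

namespace Real

lemma sq_le_sinh_sq (y : ℝ) : y ^ 2 ≤ sinh y ^ 2 := by
  rcases le_total 0 y with hy | hy
  · exact pow_le_pow_left₀ hy (self_le_sinh_iff.2 hy) 2
  · simpa using pow_le_pow_left₀ (neg_nonneg.2 hy) (neg_le_neg (sinh_le_self_iff.2 hy)) 2

lemma neg_log_le_inv_sub_div_two {q : ℝ} (hq0 : 0 < q) (hq1 : q ≤ 1) :
    -log q ≤ (q⁻¹ - q) / 2 := by
  have h := sinh_le_self_iff.2 (log_nonpos hq0.le hq1)
  rw [sinh_eq, exp_neg, exp_log hq0] at h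
  linarith

lemma artanh_neg_eq_neg_artanh (x : ℝ) : artanh (-x) = -artanh x := by
  rw [artanh, artanh, sub_neg_eq_add, ← sub_eq_add_neg, ← inv_div, sqrt_inv, log_inv]

lemma artanh_sq_le_sq_div_one_sub_sq {s : ℝ} (hs : s ∈ Ioo (-1) 1) :
    artanh s ^ 2 ≤ s ^ 2 / (1 - s ^ 2) := by
  have h1 : 0 ≤ 1 - s ^ 2 := by nlinarith [hs.1, hs.2]
  simpa [sinh_artanh hs, div_pow, sq_sqrt h1] using sq_le_sinh_sq (artanh s)

lemma add_pow_three_div_three_le_artanh {s : ℝ} (h0 : 0 ≤ s) (h1 : s < 1) :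
    s + s ^ 3 / 3 ≤ artanh s := by
  have hsum := hasSum_log_sub_log_of_abs_lt_one (abs_lt.2 ⟨by linarith, h1⟩)
  have h2 := sum_le_hasSum (Finset.range 2) (fun k _ => by positivity) hsum
  rw [artanh_eq_half_log ⟨by linarith, h1.le⟩, log_div (by linarith) (by linarith)]
  norm_num [Finset.sum_range_succ] at h2
  linarith

lemma add_pow_three_div_three_sq_le_artanh_sq {s : ℝ} (hs : s ∈ Ioo (-1) 1) :
    (s + s ^ 3 / 3) ^ 2 ≤ artanh s ^ 2 := by
  rcases le_total 0 s with h0 | h0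
  · exact pow_le_pow_left₀ (by positivity) (add_pow_three_div_three_le_artanh h0 hs.2) 2
  · obtain ⟨t, rfl⟩ : ∃ t, s = -t := ⟨-s, (neg_neg s).symm⟩
    have ht : 0 ≤ t := neg_nonpos.1 h0
    have h := pow_le_pow_left₀ (by positivity)
      (add_pow_three_div_three_le_artanh ht (by linarith [hs.1])) 2
    rw [artanh_neg_eq_neg_artanh, neg_sq]
    linarith [show (-t + (-t) ^ 3 / 3) ^ 2 = (t + t ^ 3 / 3) ^ 2 by ring]

end Real

open Real

lemma one_sub_sq_sq_mul_artanh_sq_div_le_neg_log {s : ℝ} (hs : s ∈ Ioo (-1) 1) :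
    (1 - s ^ 2) ^ 2 * artanh s ^ 2 / (1 + s ^ 2) ^ 2 ≤ -log (1 - s ^ 2 + s ^ 4) := by
  have h1 : 0 < 1 - s ^ 2 := by nlinarith [hs.1, hs.2]
  have hq : 0 < 1 - s ^ 2 + s ^ 4 := by positivity
  calc (1 - s ^ 2) ^ 2 * artanh s ^ 2 / (1 + s ^ 2) ^ 2
      ≤ (1 - s ^ 2) ^ 2 * (s ^ 2 / (1 - s ^ 2)) / (1 + s ^ 2) ^ 2 := by
        gcongr; exact artanh_sq_le_sq_div_one_sub_sq hs
    _ = s ^ 2 * (1 - s ^ 2) / (1 + s ^ 2) ^ 2 := by field_simp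
    _ ≤ s ^ 2 * (1 - s ^ 2) := div_le_self (by positivity) (one_le_pow₀ (by nlinarith))
    _ = 1 - (1 - s ^ 2 + s ^ 4) := by ring
    _ ≤ -log (1 - s ^ 2 + s ^ 4) := by linarith [log_le_sub_one_of_pos hq]

lemma neg_log_le_one_sub_sq_mul_artanh_sq {s : ℝ} (hs : s ∈ Ioo (-1) 1) :
    -log (1 - s ^ 2 + s ^ 4) ≤ (1 - s ^ 2) * artanh s ^ 2 := by
  have h1 : 0 < 1 - s ^ 2 := by nlinarith [hs.1, hs.2]
  have hq : 0 < 1 - s ^ 2 + s ^ 4 := by positivity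
  have hq1 : 1 - s ^ 2 + s ^ 4 ≤ 1 := by nlinarith
  have key : 0 ≤ s ^ 4 * (1 - s ^ 2) * (3 - s ^ 2 + 10 * s ^ 4 + 2 * s ^ 6) := by
    have : 0 ≤ 3 - s ^ 2 := by linarith
    positivity
  -- `key / 9` is exactly `2q (1 - s²) (s + s³/3)² - (1 - q²)` for `q = 1 - s² + s⁴`.
  calc -log (1 - s ^ 2 + s ^ 4)
      ≤ ((1 - s ^ 2 + s ^ 4)⁻¹ - (1 - s ^ 2 + s ^ 4)) / 2 := neg_log_le_inv_sub_div_two hq hq1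
    _ ≤ (1 - s ^ 2) * (s + s ^ 3 / 3) ^ 2 := by
        rw [inv_eq_one_div, div_sub' hq.ne', div_div, div_le_iff₀ (by positivity)]
        linear_combination key / 9
    _ ≤ (1 - s ^ 2) * artanh s ^ 2 :=
        mul_le_mul_of_nonneg_left (add_pow_three_div_three_sq_le_artanh_sq hs) h1.le

lemma log_div_one_sub_sq {x : ℝ} (hx0 : 0 < x) (hx1 : x < 1) :
    log (x / (1 - x)) ^ 2 = 4 * artanh (1 - 2 * x) ^ 2 := by
  have h : (1 + (1 - 2 * x)) / (1 - (1 - 2 * x)) = (x / (1 - x))⁻¹ := by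
    field_simp; ring
  rw [artanh_eq_half_log ⟨by linarith, by linarith⟩, h, log_inv]
  ring

/-- For every `x ∈ (0,1)`, the non-local stabilizer 2-Rényi entropy of a
single entangled pair of qubits with spectrum `(x, 1−x)`, namely
`M₂(x) = −log(1 − 4x + 20x² − 32x³ + 16x⁴)`, is sandwiched between the two anti-flatness
measures:
`x²(1−x)²(log(x/(1−x)))²/(x²+(1−x)²)² ≤ M₂(x) ≤ x(1−x)(log(x/(1−x)))²`. -/
theorem nonlocalMagic_pair_sandwich (x : ℝ) (hx0 : 0 < x) (hx1 : x < 1) :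
    x ^ 2 * (1 - x) ^ 2 * (Real.log (x / (1 - x))) ^ 2 / (x ^ 2 + (1 - x) ^ 2) ^ 2 ≤
        -Real.log (1 - 4 * x + 20 * x ^ 2 - 32 * x ^ 3 + 16 * x ^ 4) ∧
      -Real.log (1 - 4 * x + 20 * x ^ 2 - 32 * x ^ 3 + 16 * x ^ 4) ≤
        x * (1 - x) * (Real.log (x / (1 - x))) ^ 2 := by
  have hs : 1 - 2 * x ∈ Ioo (-1 : ℝ) 1 := ⟨by linarith, by linarith⟩
  have hQ : 1 - 4 * x + 20 * x ^ 2 - 32 * x ^ 3 + 16 * x ^ 4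
      = 1 - (1 - 2 * x) ^ 2 + (1 - 2 * x) ^ 4 := by ring
  have hD : x ^ 2 + (1 - x) ^ 2 = (1 + (1 - 2 * x) ^ 2) / 2 := by ring
  rw [log_div_one_sub_sq hx0 hx1, hQ]
  constructor
  · calc x ^ 2 * (1 - x) ^ 2 * (4 * artanh (1 - 2 * x) ^ 2) / (x ^ 2 + (1 - x) ^ 2) ^ 2
        = (1 - (1 - 2 * x) ^ 2) ^ 2 * artanh (1 - 2 * x) ^ 2 / (1 + (1 - 2 * x) ^ 2) ^ 2 := by
          rw [hD, div_eq_div_iff (by positivity) (by positivity)]; ring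
      _ ≤ _ := one_sub_sq_sq_mul_artanh_sq_div_le_neg_log hs
  · calc _ ≤ (1 - (1 - 2 * x) ^ 2) * artanh (1 - 2 * x) ^ 2 :=
          neg_log_le_one_sub_sq_mul_artanh_sq hs
      _ = x * (1 - x) * (4 * artanh (1 - 2 * x) ^ 2) := by ring
end
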